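/- Let G be a connected simple graph on n vertices (n odd, n ≥ 3) with chromatic number χ(G) = 2. Then ABC(G) ≤ (1/2)·sqrt((n-2)(n²-1)), with equality iff G is the complete bipartite graph K_{(n-1)/2,(n+1)/2}. -/

import Mathlib

/-- The degree of a vertex. -/
noncomputable def deg {V : Type*} (G : SimpleGraph V) (v : V) : ℕ :=
  Nat.card {w | G.Adj v w}

open scoped Classical in
/-- The atom-bond connectivity index:
`ABC(G) = ∑_{uv ∈ E(G)} sqrt((d(u)+d(v)-2)/(d(u)d(v)))`,
computed as half the sum over ordered adjacent pairs. -/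
noncomputable def ABC {V : Type*} [Fintype V] (G : SimpleGraph V) : ℝ :=
  (∑ u : V, ∑ v : V, if G.Adj u v then
    Real.sqrt (((deg G u : ℝ) + (deg G v : ℝ) - 2) / ((deg G u : ℝ) * (deg G v : ℝ)))
  else 0) / 2

/-- The complete bipartite graph on `Fin n` with parts `{0, …, m-1}` and `{m, …, n-1}`. -/
def compBipartite (n m : ℕ) : SimpleGraph (Fin n) where
  Adj u v := (u.val < m) ≠ (v.val < m)
  symm := ⟨fun u v h => h.symm⟩
  loopless := ⟨fun u h => h rfl⟩

/-!
Let `s` and `sᶜ` be the colour classes, of sizes `a + b = n`. Adjacent vertices have disjoint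
neighbourhoods, so `d(u) + d(v) ≤ n` on every edge and `ABC(G) ≤ √(n - 2) · R(G)`, where `R` is
the Randić index. Weighting the vertices of `s` by `√(b / a)` and those of `sᶜ` by `√(a / b)`,
AM-GM bounds each edge term `1 / √(d(u) d(v))` of `R` by the mean of `w(u) / d(u)` and
`w(v) / d(v)`; summed over the edges this gives `R(G) ≤ √(a b)`, and `4 a b ≤ n² - 1` as `n` is
odd. In the equality case every edge has `d(u) + d(v) = n`, which together with `d(u) ≤ b` and
`d(v) ≤ a` makes `G` complete bipartite, and `4 a b = n² - 1` forces `{a, b} = {(n-1)/2, (n+1)/2}`.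
-/

open Finset Real

lemma Real.mul_sqrt_div_self {x : ℝ} (hx : 0 ≤ x) (y : ℝ) : x * √(y / x) = √(x * y) := by
  rcases hx.eq_or_lt with rfl | hx
  · simp
  · calc x * √(y / x) = √(x ^ 2) * √(y / x) := by rw [sqrt_sq hx.le]
      _ = √(x * y) := by
        rw [← sqrt_mul (sq_nonneg x)]
        congr 1
        field_simp

lemma Real.inv_sqrt_mul_le_add_div {d e x y : ℝ} (hd : 0 ≤ d) (he : 0 ≤ e) (hx : 0 ≤ x)
    (hy : 0 ≤ y) (hxy : 1 ≤ x * y) : (√(d * e))⁻¹ ≤ (x / d + y / e) / 2 := by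
  have hde : 0 ≤ d * e := mul_nonneg hd he
  have hp : 0 ≤ x / d := by positivity
  have hq : 0 ≤ y / e := by positivity
  calc (√(d * e))⁻¹ = √(1 / (d * e)) := by rw [sqrt_div' _ hde, sqrt_one, one_div]
    _ ≤ √(x / d * (y / e)) := by
      apply sqrt_le_sqrt
      rw [div_mul_div_comm]
      exact div_le_div_of_nonneg_right hxy hde
    _ ≤ (x / d + y / e) / 2 := by
      rw [sqrt_mul hp]
      nlinarith [sq_nonneg (√(x / d) - √(y / e)), sq_sqrt hp, sq_sqrt hq]

lemma Real.sqrt_add_sub_two_div_mul_le {d e N : ℝ} (hd : 0 ≤ d) (he : 0 ≤ e) (h : d + e ≤ N) :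
    √((d + e - 2) / (d * e)) ≤ √(N - 2) * (√(d * e))⁻¹ := by
  rw [sqrt_div' _ (by positivity), div_eq_mul_inv]
  gcongr

lemma Real.add_eq_of_sqrt_add_sub_two_div_mul_eq {d e N : ℝ} (hd : 1 ≤ d) (he : 1 ≤ e)
    (h : d + e ≤ N) (heq : √((d + e - 2) / (d * e)) = √(N - 2) * (√(d * e))⁻¹) :
    d + e = N := by
  rw [sqrt_div' _ (by positivity), div_eq_mul_inv] at heq
  have hsqrt := mul_right_cancel₀ (inv_ne_zero (sqrt_pos.2 (by nlinarith)).ne') heq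
  rw [sqrt_inj (by linarith) (by linarith)] at hsqrt
  linarith

lemma Real.one_div_two_mul_sqrt (x : ℝ) : 1 / 2 * √x = √(x / 4) := by
  rw [sqrt_div' x (by norm_num), show (4 : ℝ) = 2 ^ 2 by norm_num, sqrt_sq (by norm_num)]
  ring

lemma Real.sqrt_mul_sub_two_le_half_sqrt {p n : ℝ} (hn : 2 ≤ n) (h : 4 * p + 1 ≤ n ^ 2) :
    √(p * (n - 2)) ≤ 1 / 2 * √((n - 2) * (n ^ 2 - 1)) := by
  rw [one_div_two_mul_sqrt]
  exact sqrt_le_sqrt (by nlinarith)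

lemma Real.four_mul_add_one_eq_sq_of_sqrt_eq {p n : ℝ} (hp : 0 ≤ p) (hn : 2 < n)
    (h : √(p * (n - 2)) = 1 / 2 * √((n - 2) * (n ^ 2 - 1))) : 4 * p + 1 = n ^ 2 := by
  rw [one_div_two_mul_sqrt,
    sqrt_inj (by nlinarith) (div_nonneg (mul_nonneg (by linarith) (by nlinarith)) zero_le_four)] at h
  have := (mul_eq_zero.1 (by linear_combination 4 * h :
    (n - 2) * (4 * p + 1 - n ^ 2) = 0)).resolve_left (by linarith)
  linarith

lemma Nat.four_mul_mul_add_one_le_sq {a b n : ℕ} (hab : a + b = n) (hn : Odd n) :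
    4 * a * b + 1 ≤ n ^ 2 := by
  subst hab
  rcases Nat.lt_or_gt_of_ne (fun hab : a = b => by
    subst hab; exact Nat.not_even_iff_odd.2 hn (Even.add_self a)) with hab | hab
  · obtain ⟨c, rfl⟩ := Nat.exists_eq_add_of_lt hab
    nlinarith
  · obtain ⟨c, rfl⟩ := Nat.exists_eq_add_of_lt hab
    nlinarith

lemma Nat.eq_or_eq_of_four_mul_mul_add_one_eq_sq {a b n : ℕ} (hab : a + b = n)
    (h : 4 * a * b + 1 = n ^ 2) : a = (n - 1) / 2 ∨ b = (n - 1) / 2 := by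
  subst hab
  have hz : ((a : ℤ) - b - 1) * ((a : ℤ) - b + 1) = 0 := by
    have := congrArg (fun k : ℕ => (k : ℤ)) h
    push_cast at this
    linear_combination -this
  rcases _root_.mul_eq_zero.1 hz with hz | hz <;> omega

lemma Finset.sum_ite_mem_const {V R : Type*} [Fintype V] [DecidableEq V] [NonAssocSemiring R]
    (s : Finset V) (x y : R) : (∑ v, if v ∈ s then x else y) = #s * x + #sᶜ * y := by
  rw [sum_ite, filter_mem_eq_inter, univ_inter, filter_not, filter_mem_eq_inter, univ_inter,
    ← compl_eq_univ_sdiff, sum_const, sum_const, nsmul_eq_mul, nsmul_eq_mul]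

namespace SimpleGraph

section Iso

variable {V W : Type*} {G : SimpleGraph V} {H : SimpleGraph W}

lemma Iso.deg_eq (φ : G ≃g H) (u : V) : deg H (φ u) = deg G u :=
  (Nat.card_congr (φ.mapNeighborSet u)).symm

theorem Iso.ABC_eq [Fintype V] [Fintype W] (φ : G ≃g H) : ABC G = ABC H := by
  unfold ABC
  congr 1
  refine Fintype.sum_equiv φ.toEquiv _ _ fun u => Fintype.sum_equiv φ.toEquiv _ _ fun v => ?_
  simp only [RelIso.coe_fn_toEquiv, φ.deg_eq]
  classical
  exact if_congr φ.map_adj_iff.symm rfl rfl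

end Iso

variable {V : Type*} [Fintype V]

section Randic

variable (G : SimpleGraph V) [DecidableRel G.Adj]

lemma deg_eq_degree (v : V) : deg G v = G.degree v := by
  rw [deg, ← card_neighborSet_eq_degree, Nat.card_eq_fintype_card]
  rfl

lemma sum_sum_neighborFinset_comm {M : Type*} [AddCommMonoid M] (f : V → V → M) :
    ∑ u, ∑ v ∈ G.neighborFinset u, f u v = ∑ u, ∑ v ∈ G.neighborFinset u, f v u := by
  simp only [neighborFinset_eq_filter, sum_filter]
  rw [sum_comm]
  simp only [adj_comm]

lemma ABC_eq_sum_neighborFinset :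
    ABC G = (∑ u, ∑ v ∈ G.neighborFinset u,
      √((G.degree u + G.degree v - 2) / (G.degree u * G.degree v))) / 2 := by
  simp only [ABC, deg_eq_degree, neighborFinset_eq_filter, sum_filter]

theorem ABC_eq_of_forall_adj (c : ℝ)
    (h : ∀ u v, G.Adj u v → √((G.degree u + G.degree v - 2) / (G.degree u * G.degree v)) = c) :
    ABC G = (∑ u, (G.degree u : ℝ)) * c / 2 := by
  rw [ABC_eq_sum_neighborFinset,
    sum_congr rfl fun u _ => sum_congr rfl fun v hv => h u v ((G.mem_neighborFinset u v).1 hv)]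
  simp only [sum_const, card_neighborFinset_eq_degree, nsmul_eq_mul, sum_mul]

variable {G} in
lemma one_le_degree_of_adj {u v : V} (h : G.Adj u v) : (1 : ℝ) ≤ G.degree u := by
  exact_mod_cast (G.degree_pos_iff_exists_adj u).2 ⟨v, h⟩

/-- The Randić index `∑_{uv ∈ E(G)} 1 / √(d(u) d(v))`. -/
noncomputable def randicIndex : ℝ :=
  (∑ u, ∑ v ∈ G.neighborFinset u, (√(G.degree u * G.degree v))⁻¹) / 2

theorem randicIndex_le_of_one_le_mul (w : V → ℝ) (hw : ∀ v, 0 ≤ w v)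
    (hadj : ∀ u v, G.Adj u v → 1 ≤ w u * w v) : G.randicIndex ≤ (∑ v, w v) / 2 := by
  have hrow : ∀ u, ∑ _v ∈ G.neighborFinset u, w u / G.degree u ≤ w u := by
    intro u
    rw [sum_const, card_neighborFinset_eq_degree, nsmul_eq_mul]
    rcases (G.degree u).eq_zero_or_pos with h | h
    · simp [h, hw u]
    · rw [mul_div_cancel₀ _ (by positivity)]
  calc G.randicIndex
      ≤ (∑ u, ∑ v ∈ G.neighborFinset u, (w u / G.degree u + w v / G.degree v) / 2) / 2 := by
        unfold randicIndex
        gcongr with u _ v hv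
        rw [mem_neighborFinset] at hv
        exact inv_sqrt_mul_le_add_div (Nat.cast_nonneg _) (Nat.cast_nonneg _) (hw u) (hw v)
          (hadj u v hv)
    _ = (∑ u, ∑ v ∈ G.neighborFinset u, w u / G.degree u) / 2 := by
        simp only [add_div, sum_add_distrib]
        rw [G.sum_sum_neighborFinset_comm (fun u v => w v / G.degree v / 2)]
        simp only [← sum_div]
        ring
    _ ≤ (∑ v, w v) / 2 := by gcongr with u; exact hrow u

theorem ABC_le_sqrt_mul_randicIndex {N : ℝ}
    (hN : ∀ u v, G.Adj u v → (G.degree u + G.degree v : ℝ) ≤ N) :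
    ABC G ≤ √(N - 2) * G.randicIndex := by
  rw [ABC_eq_sum_neighborFinset, randicIndex, mul_div_assoc', mul_sum]
  simp_rw [mul_sum]
  gcongr with u _ v hv
  exact sqrt_add_sub_two_div_mul_le (Nat.cast_nonneg _) (Nat.cast_nonneg _)
    (hN u v ((G.mem_neighborFinset u v).1 hv))

theorem degree_add_degree_eq_of_ABC_eq {N : ℝ}
    (hN : ∀ u v, G.Adj u v → (G.degree u + G.degree v : ℝ) ≤ N)
    (heq : ABC G = √(N - 2) * G.randicIndex) {u v : V} (huv : G.Adj u v) :
    (G.degree u + G.degree v : ℝ) = N := by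
  have hle : ∀ u, ∀ v ∈ G.neighborFinset u,
      √((G.degree u + G.degree v - 2) / (G.degree u * G.degree v)) ≤
        √(N - 2) * (√(G.degree u * G.degree v))⁻¹ := fun u v hv =>
    sqrt_add_sub_two_div_mul_le (Nat.cast_nonneg _) (Nat.cast_nonneg _)
      (hN u v ((G.mem_neighborFinset u v).1 hv))
  rw [ABC_eq_sum_neighborFinset, randicIndex, mul_div_assoc', mul_sum,
    div_left_inj' two_ne_zero] at heq
  simp_rw [mul_sum] at heq
  have hrow := (sum_eq_sum_iff_of_le fun u _ => sum_le_sum (hle u)).1 heq u (mem_univ u)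
  have hv : v ∈ G.neighborFinset u := (G.mem_neighborFinset u v).2 huv
  exact add_eq_of_sqrt_add_sub_two_div_mul_eq (one_le_degree_of_adj huv)
    (one_le_degree_of_adj huv.symm) (hN u v huv) ((sum_eq_sum_iff_of_le (hle u)).1 hrow v hv)

end Randic

section Bipartite

variable [DecidableEq V] {G : SimpleGraph V} {s : Finset V}

lemma IsBipartite.exists_isBipartiteWith_compl (h : G.IsBipartite) :
    ∃ s : Finset V, G.IsBipartiteWith ↑s ↑sᶜ := by
  obtain ⟨c⟩ := h
  refine ⟨({v | c v = 0} : Finset V), by rw [coe_compl]; exact disjoint_compl_right,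
    fun v w hvw => ?_⟩
  have := c.valid hvw
  simp only [coe_compl, coe_filter, mem_univ, true_and, Set.mem_compl_iff, Set.mem_ofPred_eq]
  omega

lemma IsBipartiteWith.compl (h : G.IsBipartiteWith ↑s ↑sᶜ) : G.IsBipartiteWith ↑sᶜ ↑sᶜᶜ := by
  rwa [compl_compl, isBipartiteWith_comm]

variable [DecidableRel G.Adj]

lemma IsBipartiteWith.degree_le_card_compl (h : G.IsBipartiteWith ↑s ↑sᶜ) {u : V} (hu : u ∈ s) :
    G.degree u ≤ #sᶜ := by
  simpa using isBipartiteWith_degree_le h hu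

lemma IsBipartiteWith.degree_add_degree_le_card (h : G.IsBipartiteWith ↑s ↑sᶜ) {u v : V}
    (huv : G.Adj u v) : G.degree u + G.degree v ≤ Fintype.card V := by
  wlog hu : u ∈ s generalizing s
  · exact this h.compl (mem_compl.2 hu)
  have hv : v ∈ sᶜ := h.mem_of_mem_adj hu huv
  have hdu := h.degree_le_card_compl hu
  have hdv := h.compl.degree_le_card_compl hv
  rw [compl_compl] at hdv
  rw [← card_add_card_compl s]
  omega

theorem randicIndex_le_of_isBipartiteWith (h : G.IsBipartiteWith ↑s ↑sᶜ) :
    G.randicIndex ≤ √(#s * #sᶜ) := by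
  set a : ℝ := ((#s : ℕ) : ℝ)
  set b : ℝ := ((#sᶜ : ℕ) : ℝ)
  have hsum : (∑ v, if v ∈ s then √(b / a) else √(a / b)) = 2 * √(a * b) := by
    rw [sum_ite_mem_const, mul_sqrt_div_self (by positivity), mul_sqrt_div_self (by positivity),
      mul_comm b]
    ring
  have hprod {u v : V} (hu : u ∈ s) (hv : v ∈ sᶜ) : 1 ≤ √(b / a) * √(a / b) := by
    have ha : 0 < a := Nat.cast_pos.2 (card_pos.2 ⟨u, hu⟩)
    have hb : 0 < b := Nat.cast_pos.2 (card_pos.2 ⟨v, hv⟩)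
    rw [← sqrt_mul (by positivity), div_mul_div_comm, mul_comm b, div_self (by positivity),
      sqrt_one]
  calc G.randicIndex ≤ (∑ v, if v ∈ s then √(b / a) else √(a / b)) / 2 := by
        refine G.randicIndex_le_of_one_le_mul _ (fun v => by split_ifs <;> positivity) ?_
        intro u v huv
        rcases h.mem_of_adj huv with ⟨hu, hv⟩ | ⟨hu, hv⟩
        · simp only [mem_coe] at hu hv
          rw [if_pos hu, if_neg (mem_compl.1 hv)]
          exact hprod hu hv
        · simp only [mem_coe] at hu hv
          rw [if_neg (mem_compl.1 hu), if_pos hv, mul_comm]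
          exact hprod hv hu
    _ = √(a * b) := by rw [hsum]; ring

theorem ABC_le_of_isBipartiteWith (h : G.IsBipartiteWith ↑s ↑sᶜ) :
    ABC G ≤ √(#s * #sᶜ * (Fintype.card V - 2)) := by
  rw [sqrt_mul (by positivity), mul_comm]
  calc ABC G ≤ √(Fintype.card V - 2) * G.randicIndex :=
        G.ABC_le_sqrt_mul_randicIndex fun u v huv => by
          exact_mod_cast h.degree_add_degree_le_card huv
    _ ≤ √(Fintype.card V - 2) * √(#s * #sᶜ) := by
        gcongr
        exact randicIndex_le_of_isBipartiteWith h

lemma IsBipartiteWith.neighborFinset_eq_compl (h : G.IsBipartiteWith ↑s ↑sᶜ) {u v : V}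
    (hu : u ∈ s) (huv : G.Adj u v) (hsum : G.degree u + G.degree v = Fintype.card V) :
    G.neighborFinset u = sᶜ := by
  have hdv := h.compl.degree_le_card_compl (h.mem_of_mem_adj hu huv)
  rw [compl_compl] at hdv
  refine eq_of_subset_of_card_le (by simpa using isBipartiteWith_neighborFinset_subset h hu) ?_
  rw [card_neighborFinset_eq_degree]
  have := card_add_card_compl s
  omega

theorem IsBipartiteWith.eq_top_between_of_degree_add_degree_eq (h : G.IsBipartiteWith ↑s ↑sᶜ)
    (hG : ∀ u, ∃ v, G.Adj u v)
    (hsum : ∀ u v, G.Adj u v → G.degree u + G.degree v = Fintype.card V) :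
    G = (⊤ : SimpleGraph V).between ↑s ↑sᶜ := by
  have hnbr {t : Finset V} (ht : G.IsBipartiteWith ↑t ↑tᶜ) {u : V} (hu : u ∈ t) :
      G.neighborFinset u = tᶜ := by
    obtain ⟨v, huv⟩ := hG u
    exact ht.neighborFinset_eq_compl hu huv (hsum u v huv)
  ext u v
  refine ⟨fun huv => ⟨huv.ne, h.mem_of_adj huv⟩, ?_⟩
  rintro ⟨-, ⟨hu, hv⟩ | ⟨hu, hv⟩⟩
  · rw [← mem_neighborFinset, hnbr h hu]
    exact hv
  · rw [← mem_neighborFinset, hnbr h.compl hu, compl_compl]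
    exact hv

theorem eq_top_between_of_ABC_eq (h : G.IsBipartiteWith ↑s ↑sᶜ) (hG : ∀ u, ∃ v, G.Adj u v)
    (heq : ABC G = √(#s * #sᶜ * (Fintype.card V - 2))) :
    G = (⊤ : SimpleGraph V).between ↑s ↑sᶜ := by
  have hN : ∀ u v, G.Adj u v → (G.degree u + G.degree v : ℝ) ≤ Fintype.card V :=
    fun u v huv => by exact_mod_cast h.degree_add_degree_le_card huv
  have hABC : ABC G = √(Fintype.card V - 2) * G.randicIndex := by
    refine le_antisymm (G.ABC_le_sqrt_mul_randicIndex hN) ?_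
    rw [heq, sqrt_mul (by positivity), mul_comm]
    gcongr
    exact randicIndex_le_of_isBipartiteWith h
  refine h.eq_top_between_of_degree_add_degree_eq hG fun u v huv => ?_
  exact_mod_cast G.degree_add_degree_eq_of_ABC_eq hN hABC huv

end Bipartite

section CompleteBipartite

variable [DecidableEq V] (s : Finset V)

lemma top_between_adj {u v : V} :
    ((⊤ : SimpleGraph V).between ↑s ↑sᶜ).Adj u v ↔ (u ∈ s ↔ v ∉ s) := by
  simp only [between_adj, top_adj, coe_compl, Set.mem_compl_iff, mem_coe]
  grind

lemma top_between_compl :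
    (⊤ : SimpleGraph V).between ↑sᶜ ↑sᶜᶜ = (⊤ : SimpleGraph V).between ↑s ↑sᶜ := by
  rw [compl_compl, between_comm]

lemma degree_top_between (u : V) :
    ((⊤ : SimpleGraph V).between ↑s ↑sᶜ).degree u = if u ∈ s then #sᶜ else #s := by
  rw [← card_neighborFinset_eq_degree]
  split_ifs with hu <;> congr 1 <;> ext v <;> simp only [mem_neighborFinset, top_between_adj, hu,
    mem_compl, true_iff, false_iff, not_not]

theorem ABC_top_between :
    ABC ((⊤ : SimpleGraph V).between ↑s ↑sᶜ) = √(#s * #sᶜ * (Fintype.card V - 2)) := by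
  rw [ABC_eq_of_forall_adj _ (√((#s + #sᶜ - 2) / (#s * #sᶜ))) fun u v huv => ?_]
  · simp only [degree_top_between, Nat.cast_ite, sum_ite_mem_const]
    rw [← card_add_card_compl s, Nat.cast_add, ← mul_sqrt_div_self (by positivity)]
    ring
  rw [top_between_adj] at huv
  rw [degree_top_between, degree_top_between]
  by_cases hu : u ∈ s
  · simp [hu, huv.1 hu, add_comm, mul_comm]
  · simp [hu, not_not.1 (mt huv.2 hu)]

theorem nonempty_iso_top_between_of_card_eq {s t : Finset V} (hst : #s = #t) :
    Nonempty ((⊤ : SimpleGraph V).between ↑s ↑sᶜ ≃g (⊤ : SimpleGraph V).between ↑t ↑tᶜ) := by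
  let e : {x // x ∈ s} ≃ {x // x ∈ t} := Fintype.equivOfCardEq (by simpa using hst)
  have hmem (x : V) : e.extendSubtype x ∈ t ↔ x ∈ s := by
    by_cases hx : x ∈ s
    · simpa [hx] using e.extendSubtype_mem x hx
    · simpa [hx] using e.extendSubtype_not_mem x hx
  exact ⟨⟨e.extendSubtype, by
    intro u v
    rw [top_between_adj, top_between_adj, hmem, hmem]⟩⟩

end CompleteBipartite

end SimpleGraph

open SimpleGraph

lemma compBipartite_eq_top_between (n m : ℕ) :
    compBipartite n m = (⊤ : SimpleGraph (Fin n)).between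
      ↑({i | (i : ℕ) < m} : Finset (Fin n)) ↑({i | (i : ℕ) < m} : Finset (Fin n))ᶜ := by
  ext u v
  rw [top_between_adj]
  simp only [compBipartite, ne_eq, eq_iff_iff, mem_filter, mem_univ, true_and]
  tauto

theorem nonempty_iso_compBipartite {n m : ℕ} {s : Finset (Fin n)} (hs : #s = m) :
    Nonempty ((⊤ : SimpleGraph (Fin n)).between ↑s ↑sᶜ ≃g compBipartite n m) := by
  rw [compBipartite_eq_top_between]
  refine nonempty_iso_top_between_of_card_eq ?_
  rw [Fin.card_filter_val_lt, min_eq_right, hs]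
  simpa [← hs] using card_le_univ s

theorem ABC_compBipartite {n : ℕ} (hodd : Odd n) :
    ABC (compBipartite n ((n - 1) / 2)) = 1 / 2 * √((n - 2) * (n ^ 2 - 1)) := by
  obtain ⟨k, rfl⟩ := hodd
  rw [compBipartite_eq_top_between, ABC_top_between, card_compl, Fin.card_filter_val_lt,
    Fintype.card_fin, one_div_two_mul_sqrt, show (2 * k + 1 - 1) / 2 = k by omega,
    min_eq_right (by omega), show 2 * k + 1 - k = k + 1 by omega]
  congr 1
  push_cast
  ring

theorem abc_max_chromatic_two_odd {n : ℕ} (hn : 3 ≤ n) (hodd : Odd n)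
    (G : SimpleGraph (Fin n)) (hconn : G.Connected)
    (hchi : G.chromaticNumber = 2) :
    ABC G ≤ (1 / 2 : ℝ) * Real.sqrt (((n : ℝ) - 2) * ((n : ℝ) ^ 2 - 1)) ∧
    (ABC G = (1 / 2 : ℝ) * Real.sqrt (((n : ℝ) - 2) * ((n : ℝ) ^ 2 - 1)) ↔
      Nonempty (G ≃g compBipartite n ((n - 1) / 2))) := by
  classical
  obtain ⟨s, hs⟩ := (chromaticNumber_eq_two_iff.1 hchi).1.exists_isBipartiteWith_compl
  have hcard : #s + #sᶜ = n := by rw [card_add_card_compl, Fintype.card_fin]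
  have hn' : (3 : ℝ) ≤ n := by exact_mod_cast hn
  have hABC : ABC G ≤ √(#s * #sᶜ * (n - 2)) := by simpa using ABC_le_of_isBipartiteWith hs
  have hbound : √(#s * #sᶜ * (n - 2)) ≤ 1 / 2 * √((n - 2) * (n ^ 2 - 1)) := by
    refine sqrt_mul_sub_two_le_half_sqrt (by linarith) ?_
    rw [← mul_assoc]
    exact_mod_cast Nat.four_mul_mul_add_one_le_sq hcard hodd
  refine ⟨hABC.trans hbound, fun heq => ?_, fun ⟨φ⟩ => by rw [φ.ABC_eq, ABC_compBipartite hodd]⟩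
  have hsqrt := le_antisymm hbound (heq ▸ hABC)
  have h4 : 4 * #s * #sᶜ + 1 = n ^ 2 := by
    have := four_mul_add_one_eq_sq_of_sqrt_eq (by positivity) (by linarith) hsqrt
    rw [← mul_assoc] at this
    exact_mod_cast this
  have : Nontrivial (Fin n) := Fin.nontrivial_iff_two_le.2 (by omega)
  rw [eq_top_between_of_ABC_eq hs (fun u => G.mem_support.1 (by simp [hconn.preconnected]))
    (by simpa using heq.trans hsqrt.symm)]
  rcases Nat.eq_or_eq_of_four_mul_mul_add_one_eq_sq hcard h4 with h | h
  · exact nonempty_iso_compBipartite h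
  · rw [← top_between_compl]
    exact nonempty_iso_compBipartite h
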